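/- arXiv:1605.00538 — 4 statements merged into one kernel-verified Lean document; each statement's English description precedes it below -/
import Mathlib

section
/- The x-axis {(t,0,0) : t ∈ ℝ} intersects the hexagonal closed polygon K₆ in exactly the four points (0,0,0), (1,0,0), (3,0,0) and (4,0,0); these four points lie on the edges [W₆,W₁], [W₂,W₃], [W₃,W₄] and [W₅,W₆] respectively. In particular the x-axis is a quadrisecant of K₆. -/
noncomputable section

/-- A line in ℝ³: a 1-dimensional affine subspace, in parametric form. -/
def IsLine (L : Set (Fin 3 → ℝ)) : Prop :=
  ∃ p v : Fin 3 → ℝ, v ≠ 0 ∧ L = {x | ∃ t : ℝ, x = p + t • v}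

/-- A quadrisecant of a set `S ⊆ ℝ³`: a line whose intersection with `S`
contains at least four distinct points. -/
def IsQuadrisecant (L S : Set (Fin 3 → ℝ)) : Prop :=
  IsLine L ∧ ∃ a b c d : Fin 3 → ℝ,
    a ∈ L ∩ S ∧ b ∈ L ∩ S ∧ c ∈ L ∩ S ∧ d ∈ L ∩ S ∧
    a ≠ b ∧ a ≠ c ∧ a ≠ d ∧ b ≠ c ∧ b ≠ d ∧ c ≠ d

def W₁ : Fin 3 → ℝ := ![-1/5, -3/10, 0]
def W₂ : Fin 3 → ℝ := ![4/5, 0, -1/5]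
def W₃ : Fin 3 → ℝ := ![2, 0, 1]
def W₄ : Fin 3 → ℝ := ![13/4, 0, -1/4]
def W₅ : Fin 3 → ℝ := ![17/4, -3/8, 0]
def W₆ : Fin 3 → ℝ := ![2, 3, 0]

/-- The hexagonal closed polygon K₆. -/
def K₆ : Set (Fin 3 → ℝ) :=
  segment ℝ W₁ W₂ ∪ segment ℝ W₂ W₃ ∪ segment ℝ W₃ W₄ ∪
  segment ℝ W₄ W₅ ∪ segment ℝ W₅ W₆ ∪ segment ℝ W₆ W₁

/-- The x-axis {(t,0,0) : t ∈ ℝ}. -/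
def xAxis : Set (Fin 3 → ℝ) := {x | ∃ t : ℝ, x = ![t, 0, 0]}

lemma mem61 : (![0, 0, 0] : Fin 3 → ℝ) ∈ segment ℝ W₆ W₁ := by
  refine ⟨1/11, 10/11, by norm_num, by norm_num, by norm_num, ?_⟩
  funext i; fin_cases i <;> simp [W₆, W₁] <;> norm_num

lemma mem23 : (![1, 0, 0] : Fin 3 → ℝ) ∈ segment ℝ W₂ W₃ := by
  refine ⟨5/6, 1/6, by norm_num, by norm_num, by norm_num, ?_⟩
  funext i; fin_cases i <;> simp [W₂, W₃] <;> norm_num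

lemma mem34 : (![3, 0, 0] : Fin 3 → ℝ) ∈ segment ℝ W₃ W₄ := by
  refine ⟨1/5, 4/5, by norm_num, by norm_num, by norm_num, ?_⟩
  funext i; fin_cases i <;> simp [W₃, W₄] <;> norm_num

lemma mem56 : (![4, 0, 0] : Fin 3 → ℝ) ∈ segment ℝ W₅ W₆ := by
  refine ⟨8/9, 1/9, by norm_num, by norm_num, by norm_num, ?_⟩
  funext i; fin_cases i <;> simp [W₅, W₆] <;> norm_num

lemma axis_mem (t : ℝ) : (![t, 0, 0] : Fin 3 → ℝ) ∈ xAxis := ⟨t, rfl⟩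

theorem xAxis_quadrisecant_of_K₆ :
    xAxis ∩ K₆ = {![0, 0, 0], ![1, 0, 0], ![3, 0, 0], ![4, 0, 0]} ∧
    (![0, 0, 0] : Fin 3 → ℝ) ∈ segment ℝ W₆ W₁ ∧
    (![1, 0, 0] : Fin 3 → ℝ) ∈ segment ℝ W₂ W₃ ∧
    (![3, 0, 0] : Fin 3 → ℝ) ∈ segment ℝ W₃ W₄ ∧
    (![4, 0, 0] : Fin 3 → ℝ) ∈ segment ℝ W₅ W₆ ∧
    IsQuadrisecant xAxis K₆ := by
  have hK0 : (![0,0,0] : Fin 3 → ℝ) ∈ K₆ := Or.inr mem61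
  have hK1 : (![1,0,0] : Fin 3 → ℝ) ∈ K₆ :=
    Or.inl (Or.inl (Or.inl (Or.inl (Or.inr mem23))))
  have hK3 : (![3,0,0] : Fin 3 → ℝ) ∈ K₆ :=
    Or.inl (Or.inl (Or.inl (Or.inr mem34)))
  have hK4 : (![4,0,0] : Fin 3 → ℝ) ∈ K₆ := Or.inl (Or.inr mem56)
  have hset : xAxis ∩ K₆ = {![0, 0, 0], ![1, 0, 0], ![3, 0, 0], ![4, 0, 0]} := by
    apply Set.eq_of_subset_of_subset
    · rintro x ⟨⟨t, rfl⟩, hk⟩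
      simp only [Set.mem_insert_iff, Set.mem_singleton_iff]
      rcases hk with ((((h | h) | h) | h) | h) | h
      · obtain ⟨a, b, ha, hb, hab, hc⟩ := h
        have h1 := congrFun hc 1
        have h2 := congrFun hc 2
        simp [W₁, W₂] at h1 h2
        exfalso; linarith
      · obtain ⟨a, b, ha, hb, hab, hc⟩ := h
        have h0 := congrFun hc 0
        have h2 := congrFun hc 2
        simp [W₂, W₃] at h0 h2
        have : t = 1 := by linarith
        subst this; exact Or.inr (Or.inl rfl)
      · obtain ⟨a, b, ha, hb, hab, hc⟩ := h
        have h0 := congrFun hc 0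
        have h2 := congrFun hc 2
        simp [W₃, W₄] at h0 h2
        have : t = 3 := by linarith
        subst this; exact Or.inr (Or.inr (Or.inl rfl))
      · obtain ⟨a, b, ha, hb, hab, hc⟩ := h
        have h1 := congrFun hc 1
        have h2 := congrFun hc 2
        simp [W₄, W₅] at h1 h2
        exfalso; linarith
      · obtain ⟨a, b, ha, hb, hab, hc⟩ := h
        have h0 := congrFun hc 0
        have h1 := congrFun hc 1
        simp [W₅, W₆] at h0 h1
        have : t = 4 := by linarith
        subst this; exact Or.inr (Or.inr (Or.inr rfl))
      · obtain ⟨a, b, ha, hb, hab, hc⟩ := h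
        have h0 := congrFun hc 0
        have h1 := congrFun hc 1
        simp [W₆, W₁] at h0 h1
        have : t = 0 := by linarith
        subst this; exact Or.inl rfl
    · rintro x (rfl | rfl | rfl | rfl)
      · exact ⟨axis_mem 0, hK0⟩
      · exact ⟨axis_mem 1, hK1⟩
      · exact ⟨axis_mem 3, hK3⟩
      · exact ⟨axis_mem 4, hK4⟩
  refine ⟨hset, mem61, mem23, mem34, mem56, ?_, ?_⟩
  · refine ⟨![0,0,0], ![1,0,0], by norm_num [funext_iff, Fin.forall_fin_succ], ?_⟩
    ext x
    simp only [xAxis, Set.mem_setOf_eq]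
    constructor
    · rintro ⟨t, rfl⟩
      exact ⟨t, by funext i; fin_cases i <;> simp⟩
    · rintro ⟨t, rfl⟩
      exact ⟨t, by funext i; fin_cases i <;> simp⟩
  · refine ⟨![0,0,0], ![1,0,0], ![3,0,0], ![4,0,0],
      ⟨axis_mem 0, hK0⟩, ⟨axis_mem 1, hK1⟩, ⟨axis_mem 3, hK3⟩, ⟨axis_mem 4, hK4⟩,
      ?_, ?_, ?_, ?_, ?_, ?_⟩ <;>
    · intro h
      have := congrFun h 0
      simp at this
end
end

section
/- Let V_i, V_j, V_k ∈ ℝ³ and v_i, v_j, v_k ∈ ℝ³ with D := Det(v_i,v_j,v_k) ≠ 0. Let p, q, r, x ∈ ℝ with x ≠ 0 and x ≠ 1, and suppose the three points V_i + p·v_i, V_j + q·v_j, V_k + r·v_k satisfy the collinearity relation (1−x)(V_i + p·v_i) + x(V_j + q·v_j) − (V_k + r·v_k) = 0. Then: p = (Det(V_k−V_j, v_j, v_k)/D)·(1/(1−x)) + Det(V_j−V_i, v_j, v_k)/D; q = (Det(v_i, V_i−V_k, v_k)/D)·((x−1)/x) + Det(v_i, V_k−V_j, v_k)/D; and r = (Det(v_i,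 v_j, V_j−V_i)/D)·x + Det(v_i, v_j, V_i−V_k)/D. -/
noncomputable section
def Det (u v w : Fin 3 → ℝ) : ℝ := (Matrix.transpose (Matrix.of ![u, v, w])).det

lemma detExpand (u v w : Fin 3 → ℝ) : Det u v w =
    u 0 * (v 1 * w 2 - v 2 * w 1) - v 0 * (u 1 * w 2 - u 2 * w 1) + w 0 * (u 1 * v 2 - u 2 * v 1) := by
  simp [Det, Matrix.det_fin_three, Matrix.vecHead, Matrix.vecTail, Matrix.transpose_apply, Function.comp]; ring

/-- The Cramer's-rule formulas (4)–(6) for the parameters of three collinear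
points lying on three lines through Vᵢ, Vⱼ, Vₖ with direction vectors vᵢ, vⱼ, vₖ. -/
theorem cramer_formulas_for_collinear_points
    (Vi Vj Vk vi vj vk : Fin 3 → ℝ) (hD : Det vi vj vk ≠ 0)
    (p q r x : ℝ) (hx0 : x ≠ 0) (hx1 : x ≠ 1)
    (hcol : (1 - x) • (Vi + p • vi) + x • (Vj + q • vj) - (Vk + r • vk) = 0) :
    p = Det (Vk - Vj) vj vk / Det vi vj vk * (1 / (1 - x)) +
        Det (Vj - Vi) vj vk / Det vi vj vk ∧
    q = Det vi (Vi - Vk) vk / Det vi vj vk * ((x - 1) / x) +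
        Det vi (Vk - Vj) vk / Det vi vj vk ∧
    r = Det vi vj (Vj - Vi) / Det vi vj vk * x +
        Det vi vj (Vi - Vk) / Det vi vj vk := by
  have h1x : (1:ℝ) - x ≠ 0 := sub_ne_zero.mpr (Ne.symm hx1)
  have e0 := congrFun hcol 0
  have e1 := congrFun hcol 1
  have e2 := congrFun hcol 2
  simp only [Pi.add_apply, Pi.sub_apply, Pi.smul_apply, smul_eq_mul, Pi.zero_apply] at e0 e1 e2
  have hp : p * ((1 - x) * Det vi vj vk) =
      Det (Vk - Vj) vj vk + (1 - x) * Det (Vj - Vi) vj vk := by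
    simp only [detExpand, Pi.sub_apply]
    linear_combination (vj 1 * vk 2 - vj 2 * vk 1) * e0
      - (vj 0 * vk 2 - vj 2 * vk 0) * e1 + (vj 0 * vk 1 - vj 1 * vk 0) * e2
  have hq : q * (x * Det vi vj vk) =
      (x - 1) * Det vi (Vi - Vk) vk + x * Det vi (Vk - Vj) vk := by
    simp only [detExpand, Pi.sub_apply]
    linear_combination (-(vi 1 * vk 2 - vi 2 * vk 1)) * e0
      + (vi 0 * vk 2 - vi 2 * vk 0) * e1 - (vi 0 * vk 1 - vi 1 * vk 0) * e2
  have hr : r * Det vi vj vk =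
      x * Det vi vj (Vj - Vi) + Det vi vj (Vi - Vk) := by
    simp only [detExpand, Pi.sub_apply]
    linear_combination (-(vi 1 * vj 2 - vi 2 * vj 1)) * e0
      + (vi 0 * vj 2 - vi 2 * vj 0) * e1 - (vi 0 * vj 1 - vi 1 * vj 0) * e2
  refine ⟨?_, ?_, ?_⟩
  · rw [(eq_div_iff (mul_ne_zero h1x hD)).mpr hp]
    field_simp
  · rw [(eq_div_iff (mul_ne_zero hx0 hD)).mpr hq]
    field_simp
  · rw [(eq_div_iff hD).mpr hr]
    field_simp
end
end

section
/- Let ℓ₁, ℓ₂, ℓ₃, ℓ₄ be four pairwise skew lines in ℝ³ (pairwise disjoint and no two parallel), and suppose that no nonzero polynomial function on ℝ³ of total degree at most 2 vanishes identically on ℓ₁ ∪ ℓ₂ ∪ ℓ₃ ∪ ℓ₄. Then there are at most two lines in ℝ³ that intersect all four of ℓ₁, ℓ₂, ℓ₃, ℓ₄. -/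
noncomputable section

/-- Two lines in ℝ³ are skew if they are disjoint and their direction vectors
are linearly independent (not parallel). -/
def AreSkew (L₁ L₂ : Set (Fin 3 → ℝ)) : Prop :=
  L₁ ∩ L₂ = ∅ ∧ ∃ p₁ v₁ p₂ v₂ : Fin 3 → ℝ,
    L₁ = {x | ∃ t : ℝ, x = p₁ + t • v₁} ∧ L₂ = {x | ∃ t : ℝ, x = p₂ + t • v₂} ∧
    LinearIndependent ℝ ![v₁, v₂]

/-! ### Auxiliary geometry of lines -/

def lineThrough (p v : Fin 3 → ℝ) : Set (Fin 3 → ℝ) := {x | ∃ t : ℝ, x = p + t • v}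

lemma line_eq_canonical {p v x y : Fin 3 → ℝ} (hx : x ∈ lineThrough p v)
    (hy : y ∈ lineThrough p v) (hxy : x ≠ y) :
    lineThrough p v = lineThrough x (y - x) := by
  obtain ⟨s, rfl⟩ := hx
  obtain ⟨r, rfl⟩ := hy
  have hsr : r - s ≠ 0 := by
    intro h
    apply hxy
    have : r = s := by linarith [sub_eq_zero.mp h]
    rw [this]
  have hyx : (p + r • v) - (p + s • v) = (r - s) • v := by module
  ext z
  constructor
  · rintro ⟨t, rfl⟩
    refine ⟨(t - s) / (r - s), ?_⟩
    rw [hyx, smul_smul, div_mul_cancel₀ _ hsr]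
    module
  · rintro ⟨t, rfl⟩
    refine ⟨s + t * (r - s), ?_⟩
    rw [hyx, smul_smul]
    module

lemma IsLine.eq_canonical {L : Set (Fin 3 → ℝ)} (hL : IsLine L) {x y : Fin 3 → ℝ}
    (hx : x ∈ L) (hy : y ∈ L) (hxy : x ≠ y) : L = lineThrough x (y - x) := by
  obtain ⟨p, v, hv, rfl⟩ := hL
  exact line_eq_canonical hx hy hxy

lemma line_unique {L L' : Set (Fin 3 → ℝ)} (hL : IsLine L) (hL' : IsLine L')
    {x y : Fin 3 → ℝ} (hxy : x ≠ y) (hxL : x ∈ L) (hyL : y ∈ L) (hxL' : x ∈ L')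
    (hyL' : y ∈ L') : L = L' :=
  (hL.eq_canonical hxL hyL hxy).trans (hL'.eq_canonical hxL' hyL' hxy).symm

/-- Through a point lying on neither of two skew lines passes at most one
common transversal of both. -/
lemma transversal_unique_through
    {p₁ v₁ p₂ v₂ : Fin 3 → ℝ}
    (hdisj : lineThrough p₁ v₁ ∩ lineThrough p₂ v₂ = ∅)
    (hli : LinearIndependent ℝ ![v₁, v₂])
    {x : Fin 3 → ℝ} (hx1 : x ∉ lineThrough p₁ v₁) (hx2 : x ∉ lineThrough p₂ v₂)
    {L L' : Set (Fin 3 → ℝ)} (hL : IsLine L) (hL' : IsLine L')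
    (hxL : x ∈ L) (hxL' : x ∈ L')
    (hm₁ : (L ∩ lineThrough p₁ v₁).Nonempty) (hm₂ : (L ∩ lineThrough p₂ v₂).Nonempty)
    (hn₁ : (L' ∩ lineThrough p₁ v₁).Nonempty) (hn₂ : (L' ∩ lineThrough p₂ v₂).Nonempty) :
    L = L' := by
  rw [LinearIndependent.pair_iff] at hli
  obtain ⟨a₁, ha₁L, ha₁⟩ := hm₁
  obtain ⟨a₂, ha₂L, ha₂⟩ := hm₂
  obtain ⟨b₁, hb₁L, hb₁⟩ := hn₁
  obtain ⟨b₂, hb₂L, hb₂⟩ := hn₂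
  have hxa₁ : x ≠ a₁ := fun h => hx1 (h ▸ ha₁)
  have hxa₂ : x ≠ a₂ := fun h => hx2 (h ▸ ha₂)
  have hxb₁ : x ≠ b₁ := fun h => hx1 (h ▸ hb₁)
  have hxb₂ : x ≠ b₂ := fun h => hx2 (h ▸ hb₂)
  by_contra hne
  have hab₁ : a₁ ≠ b₁ := by
    intro h
    exact hne (line_unique hL hL' hxa₁ hxL ha₁L hxL' (h ▸ hb₁L))
  have hab₂ : a₂ ≠ b₂ := by
    intro h
    exact hne (line_unique hL hL' hxa₂ hxL ha₂L hxL' (h ▸ hb₂L))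
  set u := a₁ - x with hu
  set w := b₁ - x with hw
  have hLc : L = lineThrough x u := hL.eq_canonical hxL ha₁L hxa₁
  have hL'c : L' = lineThrough x w := hL'.eq_canonical hxL' hb₁L hxb₁
  obtain ⟨τ, hτeq⟩ : a₂ ∈ lineThrough x u := hLc ▸ ha₂L
  obtain ⟨σ, hσeq⟩ : b₂ ∈ lineThrough x w := hL'c ▸ hb₂L
  have hτ0 : τ ≠ 0 := by
    intro h; apply hxa₂; rw [hτeq, h]; simp
  have hσ0 : σ ≠ 0 := by
    intro h; apply hxb₂; rw [hσeq, h]; simp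
  obtain ⟨s₁, hs₁⟩ := ha₁
  obtain ⟨s₂, hs₂⟩ := hb₁
  obtain ⟨r₁, hr₁⟩ := ha₂
  obtain ⟨r₂, hr₂⟩ := hb₂
  have hd₁ : w - u = (s₂ - s₁) • v₁ := by rw [hu, hw, hs₁, hs₂]; module
  have hd₁0 : s₂ - s₁ ≠ 0 := by
    intro h
    apply hab₁
    have : s₂ = s₁ := by linarith [sub_eq_zero.mp h]
    rw [hs₁, hs₂, this]
  have hd₂ : σ • w - τ • u = (r₂ - r₁) • v₂ := by
    have h1 : σ • w - τ • u = b₂ - a₂ := by rw [hτeq, hσeq]; module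
    rw [h1, hr₁, hr₂]; module
  have hd₂0 : r₂ - r₁ ≠ 0 := by
    intro h
    apply hab₂
    have : r₂ = r₁ := by linarith [sub_eq_zero.mp h]
    rw [hr₁, hr₂, this]
  by_cases hτσ : τ = σ
  · -- the two directions would be dependent
    have : (σ * (s₂ - s₁)) • v₁ + (-(r₂ - r₁)) • v₂ = 0 := by
      have : σ • ((s₂ - s₁) • v₁) = (r₂ - r₁) • v₂ := by
        rw [← hd₁, ← hd₂, hτσ]; module
      rw [← smul_smul]
      rw [this]; module
    have := hli _ _ this
    exact hd₂0 (neg_eq_zero.mp this.2)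
  · -- otherwise the two skew lines would intersect
    set B := (τ - 1) / (τ - σ) with hB
    have hBkey : B * (τ - σ) = τ - 1 := div_mul_cancel₀ _ (sub_ne_zero.mpr hτσ)
    set A := σ * B with hA
    have key : a₁ + (A * (s₂ - s₁)) • v₁ = a₂ + (B * (r₂ - r₁)) • v₂ := by
      have e1 : (A * (s₂ - s₁)) • v₁ = A • (w - u) := by rw [mul_smul, hd₁]
      have e2 : (B * (r₂ - r₁)) • v₂ = B • (σ • w - τ • u) := by rw [mul_smul, hd₂]
      have ea₁ : a₁ = x + u := by rw [hu]; module
      rw [e1, e2, ea₁, hτeq, hA]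
      have hστ : -σ + τ ≠ 0 := by
        intro h; exact hτσ (by linarith)
      have hστ' : τ - σ ≠ 0 := sub_ne_zero.mpr hτσ
      have hc : (τ - σ) * (τ - σ)⁻¹ = 1 := mul_inv_cancel₀ hστ'
      have hc' : (-σ + τ) * (-σ + τ)⁻¹ = 1 := mul_inv_cancel₀ hστ
      match_scalars <;>
        first
          | ring1
          | linear_combination (1 - τ) * hc
          | linear_combination (τ - 1) * hc
          | linear_combination (1 - τ) * hc'
          | linear_combination (τ - 1) * hc'
    have hz₁ : a₁ + (A * (s₂ - s₁)) • v₁ ∈ lineThrough p₁ v₁ := by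
      rw [hs₁]; exact ⟨s₁ + A * (s₂ - s₁), by module⟩
    have hz₂ : a₁ + (A * (s₂ - s₁)) • v₁ ∈ lineThrough p₂ v₂ := by
      rw [key, hr₁]; exact ⟨r₁ + B * (r₂ - r₁), by module⟩
    have : a₁ + (A * (s₂ - s₁)) • v₁ ∈ (∅ : Set (Fin 3 → ℝ)) := hdisj ▸ ⟨hz₁, hz₂⟩
    exact this.elim

/-! ### Quadrics through nine points -/

open MvPolynomial

def expoFun : Fin 10 → Fin 3 → ℕ :=
  ![![0,0,0],![1,0,0],![0,1,0],![0,0,1],![2,0,0],![0,2,0],![0,0,2],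
    ![1,1,0],![1,0,1],![0,1,1]]

def expo (i : Fin 10) : Fin 3 →₀ ℕ := Finsupp.equivFunOnFinite.symm (expoFun i)

lemma expo_injective : Function.Injective expo := by
  have hE : Function.Injective expoFun := by decide
  exact fun i j h => hE (Finsupp.equivFunOnFinite.symm.injective h)

lemma expo_degree_le (i : Fin 10) : (expo i).sum (fun _ n => n) ≤ 2 := by
  have : (expo i).sum (fun _ n => n) = ∑ j : Fin 3, expoFun i j := by
    rw [Finsupp.sum_fintype]
    · rfl
    · intro _; rfl
  rw [this, Fin.sum_univ_three]
  fin_cases i <;> decide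

/-- There is a nonzero polynomial of total degree ≤ 2 vanishing at any 9 points. -/
lemma exists_quadric_through_nine (pts : Fin 3 → Fin 3 → (Fin 3 → ℝ)) :
    ∃ Q : MvPolynomial (Fin 3) ℝ, Q ≠ 0 ∧ Q.totalDegree ≤ 2 ∧
      ∀ j m : Fin 3, MvPolynomial.eval (pts j m) Q = 0 := by
  classical
  set e : Fin 3 × Fin 3 → Fin 10 → ℝ :=
    fun k i => MvPolynomial.eval (pts k.1 k.2) (monomial (expo i) 1) with he
  let φ : (Fin 10 → ℝ) →ₗ[ℝ] (Fin 3 × Fin 3 → ℝ) :=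
    { toFun := fun c k => ∑ i, c i * e k i
      map_add' := by
        intro c c'; funext k
        simp [add_mul, Finset.sum_add_distrib]
      map_smul' := by
        intro m c; funext k
        simp [Finset.mul_sum, mul_assoc] }
  have hni : ¬ Function.Injective φ := by
    intro hinj
    have := LinearMap.finrank_le_finrank_of_injective hinj
    simp [Module.finrank_fintype_fun_eq_card] at this
  rw [← LinearMap.ker_eq_bot] at hni
  obtain ⟨c, hc_mem, hc_ne⟩ := (Submodule.ne_bot_iff _).mp hni
  refine ⟨∑ i, monomial (expo i) (c i), ?_, ?_, ?_⟩
  · intro h0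
    apply hc_ne
    funext j
    have : MvPolynomial.coeff (expo j) (∑ i, monomial (expo i) (c i)) = c j := by
      rw [MvPolynomial.coeff_sum]
      rw [Finset.sum_eq_single j]
      · simp [MvPolynomial.coeff_monomial]
      · intro i _ hij
        simp [MvPolynomial.coeff_monomial, expo_injective.ne hij]
      · simp
    rw [h0] at this
    simpa using this.symm
  · exact MvPolynomial.totalDegree_finsetSum_le
      (fun i _ => le_trans (totalDegree_monomial_le _ _) (expo_degree_le i))
  · intro j m
    have hk : φ c (j, m) = 0 := by
      rw [LinearMap.mem_ker.mp hc_mem]; rfl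
    have hφ : φ c (j, m) = ∑ i, c i * e (j, m) i := rfl
    rw [map_sum, ← hk, hφ]
    refine Finset.sum_congr rfl (fun i _ => ?_)
    rw [he]
    simp [MvPolynomial.eval_monomial]

/-! ### Restriction of a polynomial to a line -/

def lineRestrict (P : MvPolynomial (Fin 3) ℝ) (p v : Fin 3 → ℝ) : Polynomial ℝ :=
  MvPolynomial.aeval (fun i => Polynomial.C (p i) + Polynomial.C (v i) * Polynomial.X) P

lemma lineRestrict_eval (P : MvPolynomial (Fin 3) ℝ) (p v : Fin 3 → ℝ) (t : ℝ) :
    (lineRestrict P p v).eval t = MvPolynomial.eval (p + t • v) P := by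
  unfold lineRestrict
  induction P using MvPolynomial.induction_on with
  | C a => simp
  | add p q hp hq => simp only [map_add, Polynomial.eval_add, hp, hq]
  | mul_X q i hq =>
      simp only [map_mul, Polynomial.eval_mul, hq, MvPolynomial.aeval_X, Polynomial.eval_add,
        Polynomial.eval_C, Polynomial.eval_mul, Polynomial.eval_X, MvPolynomial.eval_mul,
        MvPolynomial.eval_X]
      simp [mul_comm]

lemma lineRestrict_natDegree_le (P : MvPolynomial (Fin 3) ℝ) (p v : Fin 3 → ℝ) :
    (lineRestrict P p v).natDegree ≤ P.totalDegree := by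
  unfold lineRestrict
  conv_lhs => rw [P.as_sum]
  rw [map_sum]
  apply Polynomial.natDegree_sum_le_of_forall_le
  intro d hd
  rw [MvPolynomial.aeval_monomial]
  refine le_trans (Polynomial.natDegree_mul_le) ?_
  have h1 : (algebraMap ℝ (Polynomial ℝ) (MvPolynomial.coeff d P)).natDegree = 0 := by
    simp [Polynomial.algebraMap_eq]
  rw [h1, zero_add]
  refine le_trans (Polynomial.natDegree_prod_le _ _) ?_
  have h2 : ∀ i ∈ d.support,
      ((Polynomial.C (p i) + Polynomial.C (v i) * Polynomial.X) ^ d i).natDegree ≤ d i := by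
    intro i _
    refine le_trans Polynomial.natDegree_pow_le ?_
    have : (Polynomial.C (p i) + Polynomial.C (v i) * Polynomial.X).natDegree ≤ 1 := by
      refine le_trans (Polynomial.natDegree_add_le _ _) ?_
      exact max_le (by simp) (le_trans (Polynomial.natDegree_mul_le) (by simp))
    calc d i * (Polynomial.C (p i) + Polynomial.C (v i) * Polynomial.X).natDegree
        ≤ d i * 1 := Nat.mul_le_mul_left _ this
      _ = d i := mul_one _
  refine le_trans (Finset.sum_le_sum h2) ?_
  exact MvPolynomial.le_totalDegree hd

lemma card_three {t₀ t₁ t₂ : ℝ} (h01 : t₀ ≠ t₁) (h02 : t₀ ≠ t₂) (h12 : t₁ ≠ t₂) :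
    ({t₀, t₁, t₂} : Finset ℝ).card = 3 := by
  rw [Finset.card_insert_of_notMem (by simp [h01, h02]),
    Finset.card_insert_of_notMem (by simp [h12]), Finset.card_singleton]

/-- A polynomial of total degree ≤ 2 vanishing at three points of a line vanishes on it. -/
lemma vanish_on_line {P : MvPolynomial (Fin 3) ℝ} (hP : P.totalDegree ≤ 2)
    (p v : Fin 3 → ℝ) {t₀ t₁ t₂ : ℝ} (h01 : t₀ ≠ t₁) (h02 : t₀ ≠ t₂) (h12 : t₁ ≠ t₂)
    (e0 : MvPolynomial.eval (p + t₀ • v) P = 0)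
    (e1 : MvPolynomial.eval (p + t₁ • v) P = 0)
    (e2 : MvPolynomial.eval (p + t₂ • v) P = 0) :
    ∀ t : ℝ, MvPolynomial.eval (p + t • v) P = 0 := by
  have hq : lineRestrict P p v = 0 := by
    apply Polynomial.eq_zero_of_natDegree_lt_card_of_eval_eq_zero' _ ({t₀, t₁, t₂} : Finset ℝ)
    · intro t ht
      simp only [Finset.mem_insert, Finset.mem_singleton] at ht
      rcases ht with rfl | rfl | rfl <;> rw [lineRestrict_eval] <;> assumption
    · rw [card_three h01 h02 h12]
      exact lt_of_le_of_lt (le_trans (lineRestrict_natDegree_le P p v) hP) (by norm_num)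
  intro t
  rw [← lineRestrict_eval, hq, Polynomial.eval_zero]

/-- A nonzero polynomial of degree ≤ 2 has at most two roots. -/
lemma roots_le_two {q : Polynomial ℝ} (hq : q ≠ 0) (hd : q.natDegree ≤ 2) :
    ∃ a b : ℝ, ∀ t : ℝ, q.eval t = 0 → t = a ∨ t = b := by
  by_contra h
  push_neg at h
  obtain ⟨t₀, h₀, _, _⟩ := h 0 0
  obtain ⟨t₁, h₁, ht₁0, _⟩ := h t₀ t₀
  obtain ⟨t₂, h₂, ht₂0, ht₂1⟩ := h t₀ t₁
  refine hq (Polynomial.eq_zero_of_natDegree_lt_card_of_eval_eq_zero' q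
    ({t₀, t₁, t₂} : Finset ℝ) ?_ ?_)
  · intro t ht
    simp only [Finset.mem_insert, Finset.mem_singleton] at ht
    rcases ht with rfl | rfl | rfl <;> assumption
  · rw [card_three (Ne.symm ht₁0) (Ne.symm ht₂0) (Ne.symm ht₂1)]
    exact lt_of_le_of_lt hd (by norm_num)

/-- Four pairwise skew lines in ℝ³ not lying on a common (possibly degenerate)
quadric surface have at most two common transversals. -/
theorem at_most_two_transversals
    (ℓ₁ ℓ₂ ℓ₃ ℓ₄ : Set (Fin 3 → ℝ))
    (h₁ : IsLine ℓ₁) (h₂ : IsLine ℓ₂) (h₃ : IsLine ℓ₃) (h₄ : IsLine ℓ₄)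
    (h₁₂ : AreSkew ℓ₁ ℓ₂) (h₁₃ : AreSkew ℓ₁ ℓ₃) (h₁₄ : AreSkew ℓ₁ ℓ₄)
    (h₂₃ : AreSkew ℓ₂ ℓ₃) (h₂₄ : AreSkew ℓ₂ ℓ₄) (h₃₄ : AreSkew ℓ₃ ℓ₄)
    (hquad : ¬ ∃ P : MvPolynomial (Fin 3) ℝ, P ≠ 0 ∧ P.totalDegree ≤ 2 ∧
      ∀ x ∈ ℓ₁ ∪ ℓ₂ ∪ ℓ₃ ∪ ℓ₄, MvPolynomial.eval x P = 0) :
    ∃ L₁ L₂ : Set (Fin 3 → ℝ), ∀ L : Set (Fin 3 → ℝ), IsLine L →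
      (L ∩ ℓ₁).Nonempty → (L ∩ ℓ₂).Nonempty → (L ∩ ℓ₃).Nonempty →
      (L ∩ ℓ₄).Nonempty → L = L₁ ∨ L = L₂ := by
  classical
  obtain ⟨p₁, v₁, hv₁, hl₁⟩ := h₁
  obtain ⟨p₂, v₂, hv₂, hl₂⟩ := h₂
  obtain ⟨p₃, v₃, hv₃, hl₃⟩ := h₃
  obtain ⟨p₄, v₄, hv₄, hl₄⟩ := h₄
  -- package the three first lines
  set pp : Fin 3 → (Fin 3 → ℝ) := ![p₁, p₂, p₃] with hpp
  set vv : Fin 3 → (Fin 3 → ℝ) := ![v₁, v₂, v₃] with hvv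
  set lines : Fin 3 → Set (Fin 3 → ℝ) := ![ℓ₁, ℓ₂, ℓ₃] with hlines
  have hlparam : ∀ j : Fin 3, lines j = lineThrough (pp j) (vv j) := by
    intro j
    fin_cases j
    · exact hl₁
    · exact hl₂
    · exact hl₃
  -- a quadric through nine chosen points, three on each of ℓ₁, ℓ₂, ℓ₃
  obtain ⟨Q, hQ0, hQdeg, hQpts⟩ := exists_quadric_through_nine
    (fun j m => pp j + (m : ℝ) • vv j)
  -- Q vanishes on ℓ₁ ∪ ℓ₂ ∪ ℓ₃
  have hQvanish : ∀ j : Fin 3, ∀ x ∈ lines j, MvPolynomial.eval x Q = 0 := by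
    intro j x hx
    rw [hlparam j] at hx
    obtain ⟨t, rfl⟩ := hx
    refine vanish_on_line hQdeg (pp j) (vv j)
      (t₀ := 0) (t₁ := 1) (t₂ := 2) (by norm_num) (by norm_num) (by norm_num) ?_ ?_ ?_ t
    · have := hQpts j 0
      have h0 : (((0 : Fin 3) : ℕ) : ℝ) = 0 := by norm_num
      rwa [h0] at this
    · have := hQpts j 1
      have h1 : (((1 : Fin 3) : ℕ) : ℝ) = 1 := by norm_num
      rwa [h1] at this
    · have := hQpts j 2
      have h2 : (((2 : Fin 3) : ℕ) : ℝ) = 2 := by norm_num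
      rwa [h2] at this
  have hQ1 : ∀ x ∈ ℓ₁, MvPolynomial.eval x Q = 0 := hQvanish 0
  have hQ2 : ∀ x ∈ ℓ₂, MvPolynomial.eval x Q = 0 := hQvanish 1
  have hQ3 : ∀ x ∈ ℓ₃, MvPolynomial.eval x Q = 0 := hQvanish 2
  -- Q does not vanish identically on ℓ₄
  have hnv : ∃ s : ℝ, MvPolynomial.eval (p₄ + s • v₄) Q ≠ 0 := by
    by_contra hall
    push_neg at hall
    apply hquad
    refine ⟨Q, hQ0, hQdeg, ?_⟩
    intro x hx
    rcases hx with ((hx | hx) | hx) | hx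
    · exact hQ1 x hx
    · exact hQ2 x hx
    · exact hQ3 x hx
    · rw [hl₄] at hx
      obtain ⟨t, rfl⟩ := hx
      exact hall t
  -- the restriction of Q to ℓ₄ is a nonzero polynomial of degree ≤ 2
  have hq₄0 : lineRestrict Q p₄ v₄ ≠ 0 := by
    obtain ⟨s, hs⟩ := hnv
    intro h0
    apply hs
    rw [← lineRestrict_eval, h0, Polynomial.eval_zero]
  obtain ⟨t₁, t₂, hroots⟩ :=
    roots_le_two hq₄0 (le_trans (lineRestrict_natDegree_le Q p₄ v₄) hQdeg)
  set x₁ : Fin 3 → ℝ := p₄ + t₁ • v₄ with hx₁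
  set x₂ : Fin 3 → ℝ := p₄ + t₂ • v₄ with hx₂
  have hx₁mem : x₁ ∈ ℓ₄ := by rw [hl₄]; exact ⟨t₁, rfl⟩
  have hx₂mem : x₂ ∈ ℓ₄ := by rw [hl₄]; exact ⟨t₂, rfl⟩
  -- every transversal passes through x₁ or x₂
  have hthrough : ∀ L : Set (Fin 3 → ℝ), IsLine L →
      (L ∩ ℓ₁).Nonempty → (L ∩ ℓ₂).Nonempty → (L ∩ ℓ₃).Nonempty →
      (L ∩ ℓ₄).Nonempty → x₁ ∈ L ∨ x₂ ∈ L := by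
    intro L hL m1 m2 m3 m4
    obtain ⟨pL, vL, hvL, hlL⟩ := hL
    obtain ⟨a₁, ha₁L, ha₁⟩ := m1
    obtain ⟨a₂, ha₂L, ha₂⟩ := m2
    obtain ⟨a₃, ha₃L, ha₃⟩ := m3
    obtain ⟨a₄, ha₄L, ha₄⟩ := m4
    rw [hlL] at ha₁L ha₂L ha₃L ha₄L
    obtain ⟨s₁, rfl⟩ := ha₁L
    obtain ⟨s₂, rfl⟩ := ha₂L
    obtain ⟨s₃, rfl⟩ := ha₃L
    obtain ⟨s₄, rfl⟩ := ha₄L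
    have hs12 : s₁ ≠ s₂ := by
      intro h
      have : pL + s₁ • vL ∈ ℓ₁ ∩ ℓ₂ := ⟨ha₁, h ▸ ha₂⟩
      rw [h₁₂.1] at this
      exact this
    have hs13 : s₁ ≠ s₃ := by
      intro h
      have : pL + s₁ • vL ∈ ℓ₁ ∩ ℓ₃ := ⟨ha₁, h ▸ ha₃⟩
      rw [h₁₃.1] at this
      exact this
    have hs23 : s₂ ≠ s₃ := by
      intro h
      have : pL + s₂ • vL ∈ ℓ₂ ∩ ℓ₃ := ⟨ha₂, h ▸ ha₃⟩
      rw [h₂₃.1] at this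
      exact this
    -- L lies on the quadric
    have hLQ : ∀ t : ℝ, MvPolynomial.eval (pL + t • vL) Q = 0 :=
      vanish_on_line hQdeg pL vL hs12 hs13 hs23 (hQ1 _ ha₁) (hQ2 _ ha₂) (hQ3 _ ha₃)
    -- the intersection point with ℓ₄ is a root of the restriction
    rw [hl₄] at ha₄
    obtain ⟨t, hteq⟩ := ha₄
    have : (lineRestrict Q p₄ v₄).eval t = 0 := by
      rw [lineRestrict_eval, ← hteq]
      exact hLQ s₄
    rcases hroots t this with rfl | rfl
    · left; rw [hlL]; exact ⟨s₄, hteq.symm⟩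
    · right; rw [hlL]; exact ⟨s₄, hteq.symm⟩
  -- uniqueness of the transversal through a fixed point of ℓ₄
  have huniq : ∀ z ∈ ℓ₄, ∀ L L' : Set (Fin 3 → ℝ), IsLine L → IsLine L' →
      z ∈ L → z ∈ L' →
      (L ∩ ℓ₁).Nonempty → (L ∩ ℓ₂).Nonempty →
      (L' ∩ ℓ₁).Nonempty → (L' ∩ ℓ₂).Nonempty → L = L' := by
    intro z hz L L' hL hL' hzL hzL' m1 m2 n1 n2
    obtain ⟨hdisj12, q₁, w₁, q₂, w₂, hq₁, hq₂, hli⟩ := h₁₂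
    have hz1 : z ∉ ℓ₁ := by
      intro hz1
      have : z ∈ ℓ₁ ∩ ℓ₄ := ⟨hz1, hz⟩
      rw [h₁₄.1] at this
      exact this
    have hz2 : z ∉ ℓ₂ := by
      intro hz2
      have : z ∈ ℓ₂ ∩ ℓ₄ := ⟨hz2, hz⟩
      rw [h₂₄.1] at this
      exact this
    rw [hq₁, hq₂] at hdisj12
    rw [hq₁] at hz1 m1 n1
    rw [hq₂] at hz2 m2 n2
    exact transversal_unique_through hdisj12 hli hz1 hz2 hL hL' hzL hzL' m1 m2 n1 n2
  -- conclude, choosing (if they exist) the transversals through x₁ and x₂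
  refine ⟨if h : ∃ L : Set (Fin 3 → ℝ), (IsLine L ∧ (L ∩ ℓ₁).Nonempty ∧ (L ∩ ℓ₂).Nonempty) ∧
      x₁ ∈ L then h.choose else ∅,
    if h : ∃ L : Set (Fin 3 → ℝ), (IsLine L ∧ (L ∩ ℓ₁).Nonempty ∧ (L ∩ ℓ₂).Nonempty) ∧
      x₂ ∈ L then h.choose else ∅, ?_⟩
  intro L hL m1 m2 m3 m4
  rcases hthrough L hL m1 m2 m3 m4 with hx | hx
  · left
    have hE : ∃ L' : Set (Fin 3 → ℝ), (IsLine L' ∧ (L' ∩ ℓ₁).Nonempty ∧ (L' ∩ ℓ₂).Nonempty) ∧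
        x₁ ∈ L' := ⟨L, ⟨hL, m1, m2⟩, hx⟩
    rw [dif_pos hE]
    obtain ⟨⟨hL', n1, n2⟩, hx'⟩ := hE.choose_spec
    exact huniq x₁ hx₁mem L hE.choose hL hL' hx hx' m1 m2 n1 n2
  · right
    have hE : ∃ L' : Set (Fin 3 → ℝ), (IsLine L' ∧ (L' ∩ ℓ₁).Nonempty ∧ (L' ∩ ℓ₂).Nonempty) ∧
        x₂ ∈ L' := ⟨L, ⟨hL, m1, m2⟩, hx⟩
    rw [dif_pos hE]
    obtain ⟨⟨hL', n1, n2⟩, hx'⟩ := hE.choose_spec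
    exact huniq x₂ hx₂mem L hE.choose hL hL' hx hx' m1 m2 n1 n2
end
end

section
/- Let K′ be a polygonal knot in ℝ³ and let P ∈ K′. Assume that every edge of K′ containing P has a direction vector with nonzero third coordinate (no edge of K′ through P is parallel to the xy-plane). Then there exist ε > 0 and δ > 0 such that for every polygonal knot J = ⋃_{h=1}^n [V_h, V_{h+1}] (n ≥ 3) satisfying: P is a vertex of J; J is contained in the open ball of radius ε centered at P; and every line in ℝ³ intersecting at least three of the edges of J makes an angle smaller than δ with the xy-plane — one has J ∩ K′ = {P}. -/
noncomputable section

/-- Euclidean 3-space. -/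
abbrev E3 : Type := EuclideanSpace ℝ (Fin 3)

/-!
A point `x ≠ P` of `J ∩ K'` close to `P` must lie on an edge of `K'` through `P`, so `x - P` is
steep. On the other side, `x - P` is parallel to a line meeting three edges of `J`: the line of
the edge of `J` containing `x` if that edge contains `P`, and otherwise the line `Px`, which meets
the two edges of `J` at the vertex `P` and the edge containing `x`. Such lines are flat, a
contradiction.
-/

open Set Metric Filter Topology

namespace Fin

variable {n : ℕ} [NeZero n]

lemma sub_one_ne_self (hn : 3 ≤ n) (h : Fin n) : h - 1 ≠ h := by
  rw [Ne, sub_eq_self, Fin.ext_iff, Fin.val_one', Nat.mod_eq_of_lt (by omega : 1 < n),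
    Fin.val_zero]
  omega

lemma self_ne_add_one (hn : 3 ≤ n) (h : Fin n) : h ≠ h + 1 := by
  rw [Ne, left_eq_add, Fin.ext_iff, Fin.val_one', Nat.mod_eq_of_lt (by omega : 1 < n),
    Fin.val_zero]
  omega

lemma sub_one_ne_add_one (hn : 3 ≤ n) (h : Fin n) : h - 1 ≠ h + 1 := by
  rw [Ne, sub_eq_iff_eq_add, add_assoc, left_eq_add, Fin.ext_iff, Fin.val_add, Fin.val_one',
    Nat.mod_eq_of_lt (by omega : 1 < n), Fin.val_zero, Nat.mod_eq_of_lt (by omega : 1 + 1 < n)]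
  omega

end Fin

lemma exists_pos_forall_le_of_finite {ι : Type*} [Finite ι] {p : ι → Prop} {f : ι → ℝ}
    (hf : ∀ i, p i → 0 < f i) : ∃ c > 0, ∀ i, p i → c ≤ f i := by
  have hsmall : ∀ᶠ c in 𝓝[>] (0 : ℝ), ∀ i, p i → c ≤ f i := by
    refine nhdsWithin_le_nhds (eventually_all.2 fun i => ?_)
    by_cases hi : p i
    · exact (eventually_lt_nhds (hf i hi)).mono fun c hc _ => hc.le
    · exact Eventually.of_forall fun _ hi' => absurd hi' hi
  obtain ⟨c, hc, hcpos⟩ := (hsmall.and self_mem_nhdsWithin).exists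
  exact ⟨c, hcpos, hc⟩

lemma exists_pos_ball_disjoint_of_finite {X ι : Type*} [PseudoMetricSpace X] [Finite ι]
    {s : ι → Set X} (hs : ∀ i, IsClosed (s i)) (p : X) :
    ∃ ε > 0, ∀ i, p ∉ s i → Disjoint (ball p ε) (s i) := by
  have hfar : ∀ᶠ x in 𝓝 p, ∀ i, p ∉ s i → x ∉ s i := by
    refine eventually_all.2 fun i => ?_
    by_cases hi : p ∈ s i
    · exact Eventually.of_forall fun _ hi' => absurd hi hi'
    · exact ((hs i).isOpen_compl.eventually_mem hi).mono fun _ hx _ => hx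
  obtain ⟨ε, hε, hball⟩ := eventually_nhds_iff_ball.1 hfar
  exact ⟨ε, hε, fun i hi => disjoint_left.2 fun x hx => hball x hx i hi⟩

section Segment

variable {E : Type*} [AddCommGroup E] [Module ℝ E]

lemma isClosed_segment [TopologicalSpace E] [IsTopologicalAddGroup E] [ContinuousSMul ℝ E]
    [T2Space E] (a b : E) : IsClosed (segment ℝ a b) := by
  rw [← convexHull_pair]
  exact (toFinite _).isCompact_convexHull ℝ |>.isClosed

lemma exists_ne_zero_sub_eq_smul_of_mem_segment {a b x y : E} (hx : x ∈ segment ℝ a b)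
    (hy : y ∈ segment ℝ a b) (hxy : x ≠ y) : ∃ r ≠ (0 : ℝ), x - y = r • (b - a) := by
  rw [segment_eq_image'] at hx hy
  obtain ⟨t, -, rfl⟩ := hx
  obtain ⟨s, -, rfl⟩ := hy
  refine ⟨t - s, ?_, by rw [sub_smul, add_sub_add_left_eq_sub]⟩
  intro hts
  rw [sub_eq_zero.1 hts] at hxy
  exact hxy rfl

end Segment

section Polygon

variable {E : Type*} [AddCommGroup E] [Module ℝ E]

def line (a v : E) : Set E := {x | ∃ t : ℝ, x = a + t • v}

lemma base_mem_line (a v : E) : a ∈ line a v := ⟨0, by rw [zero_smul, add_zero]⟩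

lemma add_mem_line (a v : E) : a + v ∈ line a v := ⟨1, by rw [one_smul]⟩

variable {n : ℕ} [NeZero n]

def edgesMeeting (V : Fin n → E) (L : Set E) : Set (Fin n) :=
  {h | (L ∩ segment ℝ (V h) (V (h + 1))).Nonempty}

lemma three_le_ncard_edgesMeeting_line_edge (hn : 3 ≤ n) (V : Fin n → E) (h : Fin n) :
    3 ≤ (edgesMeeting V (line (V h) (V (h + 1) - V h))).ncard :=
  (two_lt_ncard_iff (toFinite _)).2 ⟨h - 1, h, h + 1,
    ⟨V h, base_mem_line _ _, by rw [sub_add_cancel]; exact right_mem_segment ℝ _ _⟩,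
    ⟨V h, base_mem_line _ _, left_mem_segment ℝ _ _⟩,
    ⟨V (h + 1), by simpa using add_mem_line (V h) (V (h + 1) - V h), left_mem_segment ℝ _ _⟩,
    Fin.sub_one_ne_self hn h, Fin.sub_one_ne_add_one hn h, Fin.self_ne_add_one hn h⟩

lemma three_le_ncard_edgesMeeting_line_vertex (hn : 3 ≤ n) (V : Fin n → E) {i h : Fin n}
    {x : E} (hx : x ∈ segment ℝ (V h) (V (h + 1))) (hhi : h ≠ i) (hhi' : h ≠ i - 1) :
    3 ≤ (edgesMeeting V (line (V i) (x - V i))).ncard :=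
  (two_lt_ncard_iff (toFinite _)).2 ⟨i - 1, i, h,
    ⟨V i, base_mem_line _ _, by rw [sub_add_cancel]; exact right_mem_segment ℝ _ _⟩,
    ⟨V i, base_mem_line _ _, left_mem_segment ℝ _ _⟩,
    ⟨x, by simpa using add_mem_line (V i) (x - V i), hx⟩,
    Fin.sub_one_ne_self hn i, hhi'.symm, hhi.symm⟩

lemma exists_line_parallel_meeting_three_edges (hn : 3 ≤ n) (V : Fin n → E) (i : Fin n)
    {x : E} (hx : x ∈ ⋃ h, segment ℝ (V h) (V (h + 1))) (hxi : x ≠ V i) :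
    ∃ a v, 3 ≤ (edgesMeeting V (line a v)).ncard ∧ ∃ ρ ≠ (0 : ℝ), v = ρ • (x - V i) := by
  obtain ⟨h, hxh⟩ := mem_iUnion.1 hx
  by_cases hadj : h = i ∨ h = i - 1
  · have hih : V i ∈ segment ℝ (V h) (V (h + 1)) := by
      rcases hadj with rfl | rfl
      · exact left_mem_segment ℝ _ _
      · rw [sub_add_cancel]; exact right_mem_segment ℝ _ _
    obtain ⟨r, hr, hxr⟩ := exists_ne_zero_sub_eq_smul_of_mem_segment hxh hih hxi
    exact ⟨V h, V (h + 1) - V h, three_le_ncard_edgesMeeting_line_edge hn V h, r⁻¹,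
      inv_ne_zero hr, by rw [hxr, smul_smul, inv_mul_cancel₀ hr, one_smul]⟩
  · push Not at hadj
    exact ⟨V i, x - V i, three_le_ncard_edgesMeeting_line_vertex hn V hxh hadj.1 hadj.2,
      1, one_ne_zero, (one_smul ℝ _).symm⟩

end Polygon

section Elevation

variable {ι : Type*} [Fintype ι]

/-- The angle between the direction `v` and the coordinate hyperplane `{x | x k = 0}`. -/
def elevation (k : ι) (v : EuclideanSpace ℝ ι) : ℝ := Real.arcsin (|v k| / ‖v‖)

lemma elevation_smul (k : ι) {c : ℝ} (hc : c ≠ 0) (v : EuclideanSpace ℝ ι) :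
    elevation k (c • v) = elevation k v := by
  rw [elevation, elevation, PiLp.smul_apply, smul_eq_mul, norm_smul, abs_mul, Real.norm_eq_abs,
    mul_div_mul_left _ _ (abs_ne_zero.2 hc)]

lemma elevation_pos {k : ι} {v : EuclideanSpace ℝ ι} (hv : v k ≠ 0) : 0 < elevation k v := by
  have hv0 : v ≠ 0 := fun h => hv (by rw [h]; rfl)
  exact Real.arcsin_pos.2 (div_pos (abs_pos.2 hv) (norm_pos_iff.2 hv0))

end Elevation

theorem PUnion_general
    (m : ℕ) [NeZero m] (V' : Fin m → E3)
    (K' : Set E3) (hK' : K' = ⋃ h : Fin m, segment ℝ (V' h) (V' (h + 1)))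
    (P : E3) (hP : P ∈ K')
    (hedge : ∀ h : Fin m, P ∈ segment ℝ (V' h) (V' (h + 1)) →
      (V' (h + 1) - V' h) 2 ≠ 0) :
    ∃ ε > (0 : ℝ), ∃ δ > (0 : ℝ),
      ∀ (n : ℕ) (_ : NeZero n), 3 ≤ n → ∀ V : Fin n → E3, Function.Injective V →
        ∀ J : Set E3, J = ⋃ h : Fin n, segment ℝ (V h) (V (h + 1)) →
        Nonempty (J ≃ₜ Metric.sphere (0 : EuclideanSpace ℝ (Fin 2)) 1) →
        (∃ i : Fin n, V i = P) →
        J ⊆ Metric.ball P ε →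
        (∀ a v : E3, v ≠ 0 →
          3 ≤ {h : Fin n | ({x : E3 | ∃ t : ℝ, x = a + t • v} ∩
                segment ℝ (V h) (V (h + 1))).Nonempty}.ncard →
          Real.arcsin (|v 2| / ‖v‖) < δ) →
        J ∩ K' = {P} := by
  subst hK'
  obtain ⟨ε, hε, hfar⟩ :=
    exists_pos_ball_disjoint_of_finite (fun h : Fin m => isClosed_segment (V' h) (V' (h + 1))) P
  obtain ⟨δ, hδ, hsteep⟩ := exists_pos_forall_le_of_finite
    (p := fun h => P ∈ segment ℝ (V' h) (V' (h + 1)))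
    (f := fun h => elevation 2 (V' (h + 1) - V' h)) fun h hPh => elevation_pos (hedge h hPh)
  refine ⟨ε, hε, δ, hδ, ?_⟩
  rintro n _ hn V - J rfl - ⟨i, rfl⟩ hball hflat
  refine eq_singleton_iff_unique_mem.2 ⟨⟨mem_iUnion.2 ⟨i, left_mem_segment ℝ _ _⟩, hP⟩, ?_⟩
  rintro x ⟨hxJ, hxK⟩
  by_contra hxP
  obtain ⟨h, hxh⟩ := mem_iUnion.1 hxK
  have hPh : V i ∈ segment ℝ (V' h) (V' (h + 1)) := by
    by_contra hPh
    exact (hfar h hPh).ne_of_mem (hball hxJ) hxh rfl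
  obtain ⟨r, hr, hxr⟩ := exists_ne_zero_sub_eq_smul_of_mem_segment hxh hPh hxP
  obtain ⟨a, v, hv3, ρ, hρ, rfl⟩ := exists_line_parallel_meeting_three_edges hn V i hxJ hxP
  have hflat_v : elevation 2 (ρ • (x - V i)) < δ :=
    hflat a _ (smul_ne_zero hρ (sub_ne_zero.2 hxP)) hv3
  rw [hxr, smul_smul, elevation_smul 2 (mul_ne_zero hρ hr)] at hflat_v
  exact (hsteep h hPh).not_gt hflat_v

/-- Lemma 3 of the paper (`lem:PUnion`).

Let `K'` be a polygonal knot with vertices `V'` and let `P ∈ K'` be such that every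
edge of `K'` containing `P` has direction vector with nonzero third coordinate.
Then there are `ε, δ > 0` such that every polygonal knot `J` having `P` as a vertex,
contained in the open ε-ball about `P`, and such that every line meeting at least
three edges of `J` makes an angle `arcsin (|v 2| / ‖v‖) < δ` with the xy-plane,
satisfies `J ∩ K' = {P}`. -/
theorem PUnion
    (m : ℕ) [NeZero m] (hm : 3 ≤ m) (V' : Fin m → E3) (hV'inj : Function.Injective V')
    (K' : Set E3) (hK' : K' = ⋃ h : Fin m, segment ℝ (V' h) (V' (h + 1)))
    (hknot' : Nonempty (K' ≃ₜ Metric.sphere (0 : EuclideanSpace ℝ (Fin 2)) 1))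
    (P : E3) (hP : P ∈ K')
    (hedge : ∀ h : Fin m, P ∈ segment ℝ (V' h) (V' (h + 1)) →
      (V' (h + 1) - V' h) 2 ≠ 0) :
    ∃ ε > (0 : ℝ), ∃ δ > (0 : ℝ),
      ∀ (n : ℕ) (_ : NeZero n), 3 ≤ n → ∀ V : Fin n → E3, Function.Injective V →
        ∀ J : Set E3, J = ⋃ h : Fin n, segment ℝ (V h) (V (h + 1)) →
        Nonempty (J ≃ₜ Metric.sphere (0 : EuclideanSpace ℝ (Fin 2)) 1) →
        (∃ i : Fin n, V i = P) →
        J ⊆ Metric.ball P ε →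
        (∀ a v : E3, v ≠ 0 →
          3 ≤ {h : Fin n | ({x : E3 | ∃ t : ℝ, x = a + t • v} ∩
                segment ℝ (V h) (V (h + 1))).Nonempty}.ncard →
          Real.arcsin (|v 2| / ‖v‖) < δ) →
        J ∩ K' = {P} :=
  PUnion_general m V' K' hK' P hP hedge
end
end
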